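/- Let f : ℝ≥0 → ℝ≥0 be a non-decreasing convex function with f(0) = 1. Then for every n ≥ 0 there exists a complex (finite, regular Borel) measure μ on the circle 𝕋 such that the Fourier coefficients satisfy μ̂(k) = f(|k|) for all integers k with |k| ≤ n, and the total variation norm satisfies ‖μ‖ ≤ f(n)². -/

import Mathlib

/-!
Put `g = f - 1` and `b j = g (n - j)`. Then `b` is a convex sequence vanishing from `n` on, hence
(Pólya) a nonnegative combination of the triangles `d ↦ (m + 1 - |d|)₊`, `m < n`. Each triangle is
the Fourier transform of `|∑_{j ≤ m} e_j|² ≥ 0`, so there is a trigonometric polynomial `σ ≥ 0`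
with `σ̂ d = g (n - |d|)` and `∫ σ = g n`. The measure `μ = δ₀ + 2 cos(2πn·) σ dx` has
`μ̂ k = 1 + σ̂ (k - n) + σ̂ (k + n) = 1 + g |k| = f |k|` for `|k| ≤ n`, and
`‖μ‖ ≤ 1 + 2 g n = 2 f n - 1 ≤ (f n)²`. It is produced in polar form: `ρ = δ₀ + |ψ| dx` and `w`
the sign of the density `ψ`.
-/

open MeasureTheory Finset
open scoped NNReal ENNReal fwdDiff

lemma ConvexOn.two_mul_map_add_one_le {f : ℝ≥0 → ℝ≥0} (hf : ConvexOn ℝ≥0 Set.univ f) (x : ℝ≥0) :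
    2 * f (x + 1) ≤ f x + f (x + 2) := by
  have h := hf.2 (Set.mem_univ x) (Set.mem_univ (x + 2)) (zero_le : (0 : ℝ≥0) ≤ 2⁻¹)
    (zero_le : (0 : ℝ≥0) ≤ 2⁻¹) (by norm_num)
  have hmid : (2⁻¹ : ℝ≥0) • x + (2⁻¹ : ℝ≥0) • (x + 2) = x + 1 := by
    apply NNReal.coe_injective; push_cast [smul_eq_mul]; ring
  rw [hmid, smul_eq_mul, smul_eq_mul, ← mul_add] at h
  calc 2 * f (x + 1) ≤ 2 * (2⁻¹ * (f x + f (x + 2))) := by gcongr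
    _ = f x + f (x + 2) := by rw [← mul_assoc, mul_inv_cancel₀ two_ne_zero, one_mul]

lemma fwdDiff_fwdDiff_comp_tsub_nonneg {g : ℕ → ℝ} (hmono : Monotone g)
    (hconv : ∀ a, 2 * g (a + 1) ≤ g a + g (a + 2)) (n m : ℕ) :
    0 ≤ Δ_[1] (Δ_[1] fun j => g (n - j)) m := by
  simp only [fwdDiff]
  rcases lt_trichotomy (m + 1) n with h | h | h
  · have := hconv (n - (m + 2))
    rw [show n - (m + 2) + 1 = n - (m + 1) by omega, show n - (m + 2) + 2 = n - m by omega] at this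
    rw [show m + 1 + 1 = m + 2 by omega]
    linarith
  · have := hmono (Nat.zero_le 1)
    rw [show n - (m + 1 + 1) = 0 by omega, show n - (m + 1) = 0 by omega,
      show n - m = 1 by omega]
    linarith
  · rw [show n - (m + 1 + 1) = 0 by omega, show n - (m + 1) = 0 by omega,
      show n - m = 0 by omega]
    simp

lemma sum_fwdDiff_fwdDiff_mul_tsub {b : ℕ → ℝ} {N : ℕ} (hb : ∀ j, N ≤ j → b j = 0) (t : ℕ) :
    ∑ m ∈ range N, Δ_[1] (Δ_[1] b) m * ((m + 1 - t : ℕ) : ℝ) = b t := by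
  have hlarge : ∀ t, N ≤ t → ∑ m ∈ range N, Δ_[1] (Δ_[1] b) m * ((m + 1 - t : ℕ) : ℝ) = b t := by
    intro t ht
    rw [hb t ht]
    refine sum_eq_zero fun m hm => ?_
    rw [mem_range] at hm
    simp [show m + 1 - t = 0 by omega]
  rcases le_total N t with hNt | htN
  · exact hlarge t hNt
  induction htN using Nat.decreasingInduction with
  | self => exact hlarge N le_rfl
  | of_succ t ht ih =>
    have hterm : ∀ m ∈ range N, Δ_[1] (Δ_[1] b) m * ((m + 1 - t : ℕ) : ℝ) =
        Δ_[1] (Δ_[1] b) m * ((m + 1 - (t + 1) : ℕ) : ℝ) +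
          if m ∈ Ico t N then Δ_[1] (Δ_[1] b) m else 0 := by
      intro m hm
      rw [mem_range] at hm
      split_ifs with h
      · rw [mem_Ico] at h
        rw [show m + 1 - t = m + 1 - (t + 1) + 1 by omega]
        push_cast; ring
      · rw [mem_Ico] at h
        simp [show m + 1 - t = 0 by omega, show m + 1 - (t + 1) = 0 by omega]
    have telescope : ∑ m ∈ Ico t N, Δ_[1] (Δ_[1] b) m = b t - b (t + 1) := by
      refine (sum_Ico_sub (Δ_[1] b) ht.le).trans ?_
      simp only [fwdDiff, hb N le_rfl, hb (N + 1) (by omega)]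
      ring
    rw [sum_congr rfl hterm, sum_add_distrib, ih, sum_ite_mem,
      inter_eq_right.mpr fun m hm => mem_range.mpr (mem_Ico.mp hm).2,
      telescope]
    ring

lemma card_filter_range_product_sub_eq (m : ℕ) (d : ℤ) :
    #{p ∈ range m ×ˢ range m | d = (p.1 : ℤ) - p.2} = m - d.natAbs := by
  have himage : {p ∈ range m ×ˢ range m | d = (p.1 : ℤ) - p.2} =
      (range (m - d.natAbs)).image fun i => (i + d.toNat, i + (-d).toNat) := by
    ext ⟨j, l⟩
    simp only [mem_filter, mem_product, mem_range, mem_image, Prod.mk.injEq]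
    constructor
    · rintro ⟨⟨hj, hl⟩, hd⟩
      exact ⟨min j l, by omega, by omega, by omega⟩
    · rintro ⟨i, hi, rfl, rfl⟩
      omega
  rw [himage, card_image_of_injective _ fun i i' h => by simpa using congrArg Prod.fst h,
    card_range]

section PolarDecomposition

variable {X : Type*} [MeasurableSpace X] {ν : Measure X} {ψ : X → ℝ}

lemma integral_mul_sign_withDensity_abs (hψ : Measurable ψ) (F : X → ℂ) :
    ∫ x, F x * (if 0 ≤ ψ x then 1 else -1) ∂ν.withDensity (fun x => ENNReal.ofReal |ψ x|) =
      ∫ x, F x * ψ x ∂ν := by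
  rw [integral_withDensity_eq_integral_toReal_smul (by fun_prop)
    (ae_of_all _ fun _ => ENNReal.ofReal_lt_top)]
  refine integral_congr_ae (ae_of_all _ fun x => ?_)
  simp only [ENNReal.toReal_ofReal (abs_nonneg _), Complex.real_smul]
  split_ifs with h
  · rw [abs_of_nonneg h]; ring
  · rw [abs_of_neg (not_le.mp h)]; push_cast; ring

lemma integral_mul_sign_dirac_add_withDensity_abs [MeasurableSingletonClass X] {a : X}
    (hψ : Measurable ψ) (hψ_int : Integrable ψ ν) (ha : 0 ≤ ψ a) {F : X → ℂ}
    (hF : Measurable F) (hF_le : ∀ x, ‖F x‖ ≤ 1) :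
    ∫ x, F x * (if 0 ≤ ψ x then 1 else -1)
        ∂(Measure.dirac a + ν.withDensity fun x => ENNReal.ofReal |ψ x|) =
      F a + ∫ x, F x * ψ x ∂ν := by
  have : IsFiniteMeasure (ν.withDensity fun x => ENNReal.ofReal |ψ x|) :=
    isFiniteMeasure_withDensity_ofReal hψ_int.abs.2
  have hint (μ : Measure X) [IsFiniteMeasure μ] :
      Integrable (fun x => F x * (if 0 ≤ ψ x then 1 else -1)) μ := by
    refine .of_bound (hF.mul (Measurable.ite (measurableSet_le measurable_const hψ)
      measurable_const measurable_const)).aestronglyMeasurable 1 (ae_of_all _ fun x => ?_)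
    rw [norm_mul]
    split_ifs <;> simpa using hF_le x
  rw [integral_add_measure (hint _) (hint _), integral_dirac, if_pos ha, mul_one,
    integral_mul_sign_withDensity_abs hψ]

lemma dirac_add_withDensity_abs_univ {a : X} (hψ_int : Integrable ψ ν) :
    (Measure.dirac a + ν.withDensity fun x => ENNReal.ofReal |ψ x|) Set.univ =
      ENNReal.ofReal (1 + ∫ x, |ψ x| ∂ν) := by
  rw [Measure.add_apply, withDensity_apply _ MeasurableSet.univ, setLIntegral_univ,
    ← ofReal_integral_eq_lintegral_ofReal hψ_int.abs (ae_of_all _ fun _ => abs_nonneg _),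
    measure_univ, ENNReal.ofReal_add zero_le_one (integral_nonneg fun _ => abs_nonneg _),
    ENNReal.ofReal_one]

end PolarDecomposition

namespace AddCircle

variable {T : ℝ}

/-- `m` times the Fejér kernel; the name refers to its Fourier coefficients `(m - |d|)₊`. -/
noncomputable def triangleKernel (m : ℕ) (x : AddCircle T) : ℝ :=
  Complex.normSq (∑ j ∈ range m, fourier (j : ℤ) x)

@[fun_prop]
lemma continuous_triangleKernel (m : ℕ) : Continuous (triangleKernel (T := T) m) :=
  Complex.continuous_normSq.comp (continuous_finsetSum _ fun _ _ => (fourier _).continuous)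

lemma triangleKernel_nonneg (m : ℕ) (x : AddCircle T) : 0 ≤ triangleKernel m x :=
  Complex.normSq_nonneg _

lemma ofReal_triangleKernel (m : ℕ) :
    (fun x => (triangleKernel (T := T) m x : ℂ)) =
      ∑ p ∈ range m ×ˢ range m, ⇑(fourier ((p.1 : ℤ) - p.2)) := by
  funext x
  rw [triangleKernel, ← Complex.mul_conj, map_sum, sum_mul_sum, Finset.sum_apply, ← sum_product']
  refine sum_congr rfl fun p _ => ?_
  rw [← fourier_neg, ← fourier_add, sub_eq_add_neg]

noncomputable def polyaPoly (b : ℕ → ℝ) (N : ℕ) (x : AddCircle T) : ℝ :=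
  ∑ m ∈ range N, Δ_[1] (Δ_[1] b) m * triangleKernel (m + 1) x

@[fun_prop]
lemma continuous_polyaPoly (b : ℕ → ℝ) (N : ℕ) : Continuous (polyaPoly (T := T) b N) :=
  continuous_finsetSum _ fun _ _ => continuous_const.mul (continuous_triangleKernel _)

lemma polyaPoly_nonneg {b : ℕ → ℝ} (hb : ∀ m, 0 ≤ Δ_[1] (Δ_[1] b) m) (N : ℕ) (x : AddCircle T) :
    0 ≤ polyaPoly b N x :=
  sum_nonneg fun m _ => mul_nonneg (hb m) (triangleKernel_nonneg _ x)

variable [Fact (0 < T)]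

lemma integrable_of_continuous {E : Type*} [NormedAddCommGroup E] {f : AddCircle T → E}
    (hf : Continuous f) : Integrable f haarAddCircle :=
  hf.integrable_of_hasCompactSupport (.of_compactSpace f)

lemma fourierCoeff_triangleKernel (m : ℕ) (d : ℤ) :
    fourierCoeff (fun x => (triangleKernel (T := T) m x : ℂ)) d = (m - d.natAbs : ℕ) := by
  rw [ofReal_triangleKernel, fourierCoeff.sum _ _ fun p _ =>
    integrable_of_continuous (fourier _).continuous]
  simp only [Finset.sum_apply, fourierCoeff_fourier, Pi.single_apply]
  rw [sum_boole, card_filter_range_product_sub_eq]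

lemma fourierCoeff_polyaPoly {b : ℕ → ℝ} {N : ℕ} (hb : ∀ j, N ≤ j → b j = 0) (d : ℤ) :
    fourierCoeff (fun x => (polyaPoly (T := T) b N x : ℂ)) d = b d.natAbs := by
  have hsum : (fun x => (polyaPoly (T := T) b N x : ℂ)) =
      ∑ m ∈ range N, fun x => ((Δ_[1] (Δ_[1] b) m : ℝ) : ℂ) * triangleKernel (m + 1) x := by
    funext x
    simp [polyaPoly, Finset.sum_apply]
  rw [hsum, fourierCoeff.sum _ _ fun m _ => integrable_of_continuous (by fun_prop)]
  simp only [Finset.sum_apply, fourierCoeff.const_mul _ _ d, fourierCoeff_triangleKernel]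
  exact_mod_cast congrArg ((↑) : ℝ → ℂ) (sum_fwdDiff_fwdDiff_mul_tsub hb d.natAbs)

lemma integral_polyaPoly {b : ℕ → ℝ} {N : ℕ} (hb : ∀ j, N ≤ j → b j = 0) :
    ∫ x, polyaPoly (T := T) b N x ∂haarAddCircle = b 0 := by
  have h := fourierCoeff_polyaPoly (T := T) hb 0
  simp only [fourierCoeff, neg_zero, fourier_zero, one_smul] at h
  rw [integral_complex_ofReal] at h
  exact_mod_cast h

lemma fourierCoeff_fourier_mul (m : ℤ) (F : AddCircle T → ℂ) (k : ℤ) :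
    fourierCoeff (fun x => fourier m x * F x) k = fourierCoeff F (k - m) := by
  simp only [fourierCoeff, smul_eq_mul, ← mul_assoc, ← fourier_add]
  ring_nf

lemma fourierCoeff_two_re_fourier_mul (n : ℤ) {σ : AddCircle T → ℝ} (hσ : Continuous σ)
    (k : ℤ) :
    fourierCoeff (fun x => ((2 * (fourier n x).re * σ x : ℝ) : ℂ)) k =
      fourierCoeff (fun x => (σ x : ℂ)) (k - n) + fourierCoeff (fun x => (σ x : ℂ)) (k + n) := by
  have hsplit : (fun x => ((2 * (fourier n x).re * σ x : ℝ) : ℂ)) =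
      (fun x => fourier n x * σ x) + fun x => fourier (-n) x * σ x := by
    funext x
    simp only [Pi.add_apply, ← add_mul, fourier_neg, Complex.add_conj]
    push_cast; ring
  have hint (m : ℤ) : Integrable (fun x => fourier m x * (σ x : ℂ)) haarAddCircle :=
    integrable_of_continuous ((fourier m).continuous.mul (Complex.continuous_ofReal.comp hσ))
  rw [hsplit, fourierCoeff.add (hint n) (hint (-n)), Pi.add_apply, fourierCoeff_fourier_mul,
    fourierCoeff_fourier_mul, sub_neg_eq_add]

lemma integral_abs_two_re_fourier_mul_le (n : ℤ) {σ : AddCircle T → ℝ} (hσ : Continuous σ)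
    (hσ_nonneg : ∀ x, 0 ≤ σ x) :
    ∫ x, |2 * (fourier n x).re * σ x| ∂haarAddCircle ≤ 2 * ∫ x, σ x ∂haarAddCircle := by
  rw [← integral_const_mul]
  refine integral_mono (integrable_of_continuous (by fun_prop)).abs
    (integrable_of_continuous (by fun_prop)) fun x => ?_
  have hre : |(fourier n x).re| ≤ 1 := (Complex.abs_re_le_norm _).trans_eq (Circle.norm_coe _)
  rw [abs_mul, abs_mul, abs_two, abs_of_nonneg (hσ_nonneg x)]
  nlinarith [hσ_nonneg x, abs_nonneg (fourier n x).re]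

theorem exists_measure_integral_fourier_eq_polya {b : ℕ → ℝ} {n : ℕ}
    (hb_conv : ∀ m, 0 ≤ Δ_[1] (Δ_[1] b) m) (hb : ∀ j, n ≤ j → b j = 0) :
    ∃ (ρ : Measure (AddCircle T)) (w : AddCircle T → ℂ),
      IsFiniteMeasure ρ ∧ (∀ᵐ x ∂ρ, ‖w x‖ = 1) ∧
      (∀ k : ℤ, ∫ x, fourier (-k) x * w x ∂ρ = 1 + b (k - n).natAbs + b (k + n).natAbs) ∧
      ρ Set.univ ≤ ENNReal.ofReal (1 + 2 * b 0) := by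
  set σ := polyaPoly (T := T) b n
  set ψ : AddCircle T → ℝ := fun x => 2 * (fourier (n : ℤ) x).re * σ x
  have hσ : Continuous σ := continuous_polyaPoly b n
  have hψ : Continuous ψ := by fun_prop
  have hψ_int : Integrable ψ haarAddCircle := integrable_of_continuous hψ
  have hψ0 : 0 ≤ ψ 0 := by simpa [ψ] using polyaPoly_nonneg hb_conv n 0
  have : IsFiniteMeasure (haarAddCircle.withDensity fun x => ENNReal.ofReal |ψ x|) :=
    isFiniteMeasure_withDensity_ofReal hψ_int.abs.2
  refine ⟨Measure.dirac 0 + haarAddCircle.withDensity fun x => ENNReal.ofReal |ψ x|,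
    fun x => if 0 ≤ ψ x then 1 else -1, inferInstance,
    ae_of_all _ fun x => by dsimp only; split_ifs <;> simp, fun k => ?_, ?_⟩
  · rw [integral_mul_sign_dirac_add_withDensity_abs hψ.measurable hψ_int hψ0
      (fourier (-k)).continuous.measurable fun x => (Circle.norm_coe _).le]
    have hψ_coeff : ∫ x, fourier (-k) x * (ψ x : ℂ) ∂haarAddCircle =
        fourierCoeff (fun x => (ψ x : ℂ)) k := rfl
    rw [fourier_eval_zero, hψ_coeff, fourierCoeff_two_re_fourier_mul _ hσ,
      fourierCoeff_polyaPoly hb, fourierCoeff_polyaPoly hb, add_assoc]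
  · rw [dirac_add_withDensity_abs_univ hψ_int]
    refine ENNReal.ofReal_le_ofReal ?_
    have := integral_abs_two_re_fourier_mul_le (n : ℤ) hσ (polyaPoly_nonneg hb_conv n)
    rw [integral_polyaPoly hb] at this
    linarith

end AddCircle

theorem exists_measure_fourierCoeff_eq_convex
    (f : ℝ≥0 → ℝ≥0) (hmono : Monotone f)
    (hconv : ConvexOn ℝ≥0 Set.univ f) (hf0 : f 0 = 1) (n : ℕ) :
    ∃ (ρ : Measure (AddCircle (1 : ℝ))) (w : AddCircle (1 : ℝ) → ℂ),
      IsFiniteMeasure ρ ∧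
      (∀ᵐ x ∂ρ, ‖w x‖ = 1) ∧
      (∀ k : ℤ, k.natAbs ≤ n →
        ∫ x, fourier (-k) x * w x ∂ρ = ((f (k.natAbs) : ℝ) : ℂ)) ∧
      ρ Set.univ ≤ ENNReal.ofReal ((f n : ℝ) ^ 2) := by
  have : Fact ((0 : ℝ) < 1) := ⟨one_pos⟩
  set g : ℕ → ℝ := fun a => f a - 1
  have hg_mono : Monotone g := fun a b hab =>
    sub_le_sub_right (NNReal.coe_le_coe.mpr (hmono (by exact_mod_cast hab))) 1
  have hg_conv (a : ℕ) : 2 * g (a + 1) ≤ g a + g (a + 2) := by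
    have := NNReal.coe_le_coe.mpr (hconv.two_mul_map_add_one_le a)
    push_cast at this
    simp only [g]
    push_cast
    linarith
  obtain ⟨ρ, w, hρ, hw, hcoeff, hmass⟩ :=
    AddCircle.exists_measure_integral_fourier_eq_polya (T := 1) (b := fun j => g (n - j)) (n := n)
      (fwdDiff_fwdDiff_comp_tsub_nonneg hg_mono hg_conv n)
      fun j hj => by simp [g, Nat.sub_eq_zero_of_le hj, hf0]
  refine ⟨ρ, w, hρ, hw, fun k hk => ?_, hmass.trans (ENNReal.ofReal_le_ofReal ?_)⟩
  · have : n - (k - n).natAbs = k.natAbs ∧ n - (k + n).natAbs = 0 ∨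
        n - (k - n).natAbs = 0 ∧ n - (k + n).natAbs = k.natAbs := by omega
    rw [hcoeff]
    rcases this with ⟨h₁, h₂⟩ | ⟨h₁, h₂⟩ <;> simp [h₁, h₂, g, hf0]
  · simp only [g, Nat.sub_zero]
    nlinarith [sq_nonneg ((f n : ℝ) - 1)]
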